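/- Let H be a real Hilbert space, k > 0, and let A, B : H → H be bounded dissipative linear operators such that L = A + B is bijective. Let S = (I − kB)⁻¹ ∘ (I − kA)⁻¹ ∘ (I + k² A∘B) be the Douglas–Rachford operator. Then for every n ∈ ℕ and every η ∈ H: ‖exp(nkL)η − Sⁿη‖ ≤ n k · k · (1/2 + 2‖B ∘ L⁻¹‖) · ‖L²η‖, where ‖B ∘ L⁻¹‖ is the operator norm. In particular the Douglas–Rachford splitting is first-order convergent in k, uniformly on bounded time intervals nk ≤ T. -/

import Mathlib

/-!
Write `a = kA`, `b = kB`, `l = a + b = kL` and `E = exp l`. Then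
`(1 - b)(E - S) = α (G + K) - K`, where `G = E - 1 - E l` is the backward-Euler defect of the
contraction semigroup, of size `‖l²η‖ / 2`, and `K = b (E - 1) = (B L⁻¹)(E - 1) l`, of size
`‖B L⁻¹‖ ‖l²η‖`. Moreover `Sᵐ β = β Tᵐ`, where `T = α (1 + ab) β` is the average of the identity
and the product of the Cayley transforms `2α - 1`, `2β - 1`, so every `Sᵐ β` is nonexpansive.
Hence each of the `n` terms `Sᵐ (E - S) Eʲη = Sᵐ β (1 - b)(E - S) Eʲη` of the telescoping sum for
`Eⁿη - Sⁿη` is at most `k² (1/2 + 2‖B L⁻¹‖) ‖L²η‖`.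
-/

open scoped RealInnerProductSpace
open NormedSpace (exp)

def IsDissipative {H : Type*} [NormedAddCommGroup H] [InnerProductSpace ℝ H]
    (T : H →L[ℝ] H) : Prop :=
  ∀ v : H, ⟪T v, v⟫ ≤ 0

section Dissipative

variable {H : Type*} [NormedAddCommGroup H] [InnerProductSpace ℝ H] {T R : H →L[ℝ] H}

lemma IsDissipative.add {A B : H →L[ℝ] H} (hA : IsDissipative A) (hB : IsDissipative B) :
    IsDissipative (A + B) := fun v => by
  rw [add_apply, inner_add_left]
  linarith [hA v, hB v]

lemma IsDissipative.smul (hT : IsDissipative T) {s : ℝ} (hs : 0 ≤ s) : IsDissipative (s • T) :=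
  fun v => by
    rw [smul_apply, real_inner_smul_left]
    exact mul_nonpos_of_nonneg_of_nonpos hs (hT v)

lemma IsDissipative.norm_le_norm_sub_apply (hT : IsDissipative T) (y : H) : ‖y‖ ≤ ‖y - T y‖ := by
  refine pow_le_pow_iff_left₀ (norm_nonneg _) (norm_nonneg _) two_ne_zero |>.mp ?_
  rw [norm_sub_sq_real, real_inner_comm]
  nlinarith [hT y, sq_nonneg ‖T y‖]

lemma IsDissipative.norm_add_apply_le_norm_sub_apply (hT : IsDissipative T) (y : H) :
    ‖y + T y‖ ≤ ‖y - T y‖ := by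
  refine pow_le_pow_iff_left₀ (norm_nonneg _) (norm_nonneg _) two_ne_zero |>.mp ?_
  rw [norm_sub_sq_real, norm_add_sq_real, real_inner_comm]
  linarith [hT y]

lemma IsDissipative.norm_resolvent_le (hT : IsDissipative T) (hR : (1 - T) * R = 1) :
    ‖R‖ ≤ 1 := by
  refine ContinuousLinearMap.opNorm_le_bound _ zero_le_one fun x => ?_
  set y := R x
  have hx : y - T y = x := by simpa using DFunLike.congr_fun hR x
  rw [one_mul, ← hx]
  exact hT.norm_le_norm_sub_apply y

lemma IsDissipative.norm_two_smul_resolvent_sub_one_le (hT : IsDissipative T)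
    (hR : (1 - T) * R = 1) : ‖(2 : ℝ) • R - 1‖ ≤ 1 := by
  refine ContinuousLinearMap.opNorm_le_bound _ zero_le_one fun x => ?_
  set y := R x
  have hx : y - T y = x := by simpa using DFunLike.congr_fun hR x
  have hreflect : ((2 : ℝ) • R - 1) x = y + T y := calc
    _ = (2 : ℝ) • y - x := by simp [y]
    _ = y + T y := by rw [← hx]; module
  rw [hreflect, one_mul, ← hx]
  exact hT.norm_add_apply_le_norm_sub_apply y

end Dissipative

section Semigroup

variable {H : Type*} [NormedAddCommGroup H] [InnerProductSpace ℝ H]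

lemma apply_exp_smul_apply (L : H →L[ℝ] H) (t : ℝ) (v : H) :
    L (exp (t • L) v) = exp (t • L) (L v) :=
  DFunLike.congr_fun ((Commute.refl L).smul_right t).exp_right.eq v

variable [CompleteSpace H]

lemma hasDerivAt_exp_smul_apply (L : H →L[ℝ] H) (v : H) (t : ℝ) :
    HasDerivAt (fun s : ℝ => exp (s • L) v) (L (exp (t • L) v)) t :=
  (ContinuousLinearMap.apply ℝ H v).hasFDerivAt.comp_hasDerivAt t
    (hasDerivAt_exp_smul_const' L t)

variable {L : H →L[ℝ] H}

lemma IsDissipative.norm_exp_smul_apply_le (hL : IsDissipative L) {t : ℝ} (ht : 0 ≤ t) (v : H) :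
    ‖exp (t • L) v‖ ≤ ‖v‖ := by
  have hanti : Antitone fun s : ℝ => ‖exp (s • L) v‖ ^ 2 :=
    antitone_of_hasDerivAt_nonpos (fun s => (hasDerivAt_exp_smul_apply L v s).norm_sq)
      fun s => by
        change 2 * _ ≤ 0
        rw [real_inner_comm]
        linarith [hL (exp (s • L) v)]
  have h := hanti ht
  simp only [zero_smul, NormedSpace.exp_zero] at h
  exact pow_le_pow_iff_left₀ (norm_nonneg _) (norm_nonneg _) two_ne_zero |>.mp h

lemma IsDissipative.norm_exp_smul_apply_sub_le (hL : IsDissipative L) {t : ℝ} (ht : 0 ≤ t)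
    (w : H) : ‖exp (t • L) w - w‖ ≤ t * ‖L w‖ := by
  rw [mul_comm]
  simpa using norm_image_sub_le_of_norm_deriv_le_segment'
    (fun s _ => (hasDerivAt_exp_smul_apply L w s).hasDerivWithinAt)
    (fun s hs => by rw [apply_exp_smul_apply]; exact hL.norm_exp_smul_apply_le hs.1 (L w))
    t ⟨ht, le_rfl⟩

lemma IsDissipative.norm_exp_smul_apply_sub_sub_smul_le (hL : IsDissipative L) {t : ℝ}
    (ht : 0 ≤ t) (v : H) :
    ‖exp (t • L) v - v - t • exp (t • L) (L v)‖ ≤ t ^ 2 / 2 * ‖L (L v)‖ := by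
  have hderiv (s : ℝ) : HasDerivAt (fun s : ℝ => exp (s • L) v - v - s • exp (s • L) (L v))
      (-(s • exp (s • L) (L (L v)))) s := by
    refine (((hasDerivAt_exp_smul_apply L v s).sub_const v).sub
      ((hasDerivAt_id s).smul (hasDerivAt_exp_smul_apply L (L v) s))).congr_deriv ?_
    rw [apply_exp_smul_apply, apply_exp_smul_apply, id, one_smul]
    abel
  refine image_norm_le_of_norm_deriv_right_le_deriv_boundary
    (B := fun s => s ^ 2 / 2 * ‖L (L v)‖)
    (fun s _ => (hderiv s).continuousAt.continuousWithinAt)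
    (fun s _ => (hderiv s).hasDerivWithinAt) (by simp)
    (fun s => by simpa using ((hasDerivAt_pow 2 s).div_const 2).mul_const ‖L (L v)‖)
    (fun s hs => ?_) ⟨ht, le_rfl⟩
  rw [norm_neg, norm_smul, Real.norm_of_nonneg hs.1]
  exact mul_le_mul_of_nonneg_left (hL.norm_exp_smul_apply_le hs.1 _) hs.1

end Semigroup

section Ring

variable {R : Type*} [Ring R] {a b α β : R}

/-- For `a = kA`, `b = kB` and `α`, `β` the inverses of `1 - a`, `1 - b`, this is the
Douglas–Rachford operator `(1 - kB)⁻¹ (1 - kA)⁻¹ (1 + k² AB)`. -/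
def douglasRachford (a b α β : R) : R := β * (α * (1 + a * b))

lemma one_sub_mul_sub_douglasRachford {E : R} (hα : α * (1 - a) = 1) (hβ : (1 - b) * β = 1)
    (hE : Commute E (a + b)) :
    (1 - b) * (E - douglasRachford a b α β) =
      α * (E - 1 - E * (a + b) + b * (E - 1)) - b * (E - 1) := by
  rw [douglasRachford, mul_sub (1 - b) E, ← mul_assoc (1 - b) β, hβ, one_mul, ← sub_eq_zero]
  calc _ = (α * (1 - a) - 1) * (b - E) := by rw [hE.eq]; noncomm_ring
    _ = 0 := by rw [hα, sub_self, zero_mul]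

lemma mul_one_add_mul_mul_eq (hα : α * (1 - a) = 1) (hβ : (1 - b) * β = 1) :
    α * (1 + a * b) * β = α * β + (α - 1) * (β - 1) := by
  have hαa : α * a = α - 1 := by rw [← hα]; noncomm_ring
  have hbβ : b * β = β - 1 := by rw [← hβ]; noncomm_ring
  calc α * (1 + a * b) * β = α * β + (α * a) * (b * β) := by noncomm_ring
    _ = α * β + (α - 1) * (β - 1) := by rw [hαa, hbβ]

end Ring

lemma norm_pow_apply_sub_pow_apply_le {R V : Type*} [Semiring R] [SeminormedAddCommGroup V]
    [Module R V] (E S : V →L[R] V) (p : V → ℝ) (hp : ∀ v, p (E v) ≤ p v)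
    (hS : ∀ m v, ‖(S ^ m) (E v - S v)‖ ≤ p v) (n : ℕ) (v : V) :
    ‖(E ^ n) v - (S ^ n) v‖ ≤ n * p v := by
  induction n generalizing v with
  | zero => simp
  | succ n ih =>
    have hsplit : (E ^ (n + 1)) v - (S ^ (n + 1)) v =
        ((E ^ n) (E v) - (S ^ n) (E v)) + (S ^ n) (E v - S v) := by
      rw [pow_succ, pow_succ, map_sub]
      simp only [mul_apply_eq_comp]
      abel
    calc ‖(E ^ (n + 1)) v - (S ^ (n + 1)) v‖ ≤ n * p (E v) + p v := by
          rw [hsplit]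
          exact (norm_add_le _ _).trans (add_le_add (ih _) (hS n v))
      _ ≤ n * p v + p v := by gcongr; exact hp v
      _ = (n + 1 : ℕ) * p v := by push_cast; ring

section DouglasRachford

variable {H : Type*} [NormedAddCommGroup H] [InnerProductSpace ℝ H]
  {a b α β : H →L[ℝ] H}

lemma norm_mul_one_add_mul_mul_le (ha : IsDissipative a) (hb : IsDissipative b)
    (hα₁ : α * (1 - a) = 1) (hα₂ : (1 - a) * α = 1) (hβ : (1 - b) * β = 1) :
    ‖α * (1 + a * b) * β‖ ≤ 1 := by
  have hcayley : α * (1 + a * b) * β =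
      (2⁻¹ : ℝ) • (1 + ((2 : ℝ) • α - 1) * ((2 : ℝ) • β - 1)) := by
    rw [mul_one_add_mul_mul_eq hα₁ hβ]
    simp only [sub_mul, mul_sub, smul_mul_assoc, mul_smul_comm, one_mul, mul_one, smul_sub,
      smul_add, smul_smul]
    module
  have hrefl_α := ha.norm_two_smul_resolvent_sub_one_le hα₂
  have hrefl_β := hb.norm_two_smul_resolvent_sub_one_le hβ
  rw [hcayley]
  calc ‖(2⁻¹ : ℝ) • (1 + ((2 : ℝ) • α - 1) * ((2 : ℝ) • β - 1))‖
      ≤ 2⁻¹ * (‖(1 : H →L[ℝ] H)‖ + ‖(2 : ℝ) • α - 1‖ * ‖(2 : ℝ) • β - 1‖) := by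
        rw [norm_smul, Real.norm_of_nonneg (by norm_num)]
        gcongr
        exact (norm_add_le _ _).trans (add_le_add le_rfl (norm_mul_le _ _))
    _ ≤ 2⁻¹ * (1 + 1 * 1) := by
        gcongr
        · exact ContinuousLinearMap.norm_id_le
    _ = 1 := by norm_num

lemma norm_douglasRachford_pow_mul_le (ha : IsDissipative a) (hb : IsDissipative b)
    (hα₁ : α * (1 - a) = 1) (hα₂ : (1 - a) * α = 1) (hβ : (1 - b) * β = 1) (m : ℕ) :
    ‖douglasRachford a b α β ^ m * β‖ ≤ 1 := by
  have hsemiconj : SemiconjBy β (α * (1 + a * b) * β) (douglasRachford a b α β) := by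
    simp only [SemiconjBy, douglasRachford, mul_assoc]
  rw [← (hsemiconj.pow_right m).eq]
  induction m with
  | zero => simpa using hb.norm_resolvent_le hβ
  | succ m ih =>
    rw [pow_succ, ← mul_assoc]
    calc _ ≤ ‖β * (α * (1 + a * b) * β) ^ m‖ * ‖α * (1 + a * b) * β‖ := norm_mul_le _ _
      _ ≤ 1 * 1 := by gcongr; exact norm_mul_one_add_mul_mul_le ha hb hα₁ hα₂ hβ
      _ = 1 := one_mul 1

variable [CompleteSpace H]

lemma norm_one_sub_mul_exp_sub_douglasRachford_apply_le {M : H →L[ℝ] H}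
    (ha : IsDissipative a) (hb : IsDissipative b)
    (hα₁ : α * (1 - a) = 1) (hα₂ : (1 - a) * α = 1) (hβ : (1 - b) * β = 1)
    (hM : M * (a + b) = b) (ξ : H) :
    ‖((1 - b) * (exp (a + b) - douglasRachford a b α β)) ξ‖ ≤
      (1 / 2 + 2 * ‖M‖) * ‖(a + b) ((a + b) ξ)‖ := by
  set l := a + b
  set E := exp l
  have hl : IsDissipative l := ha.add hb
  have hlE (v : H) : l (E v) = E (l v) := by simpa [E] using apply_exp_smul_apply l 1 v
  set G := E ξ - ξ - E (l ξ)
  set K := b (E ξ - ξ)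
  have hG : ‖G‖ ≤ 1 / 2 * ‖l (l ξ)‖ := by
    simpa [E] using hl.norm_exp_smul_apply_sub_sub_smul_le zero_le_one ξ
  have hK : ‖K‖ ≤ ‖M‖ * ‖l (l ξ)‖ := by
    have hKM : K = M (E (l ξ) - l ξ) := by
      rw [← hlE, ← map_sub, ← mul_apply_eq_comp, hM]
    rw [hKM]
    exact M.le_opNorm_of_le (by simpa [E] using hl.norm_exp_smul_apply_sub_le zero_le_one (l ξ))
  have hdefect : ((1 - b) * (E - douglasRachford a b α β)) ξ = α (G + K) - K := by
    rw [one_sub_mul_sub_douglasRachford hα₁ hβ ((Commute.refl l).exp_left)]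
    change α ((E - 1 - E * l + b * (E - 1)) ξ) - (b * (E - 1)) ξ = _
    simp only [sub_apply, add_apply, mul_apply_eq_comp, one_apply_eq_self, map_add, map_sub, G, K]
  rw [hdefect]
  calc ‖α (G + K) - K‖ ≤ ‖G‖ + ‖K‖ + ‖K‖ :=
        (norm_sub_le _ _).trans (add_le_add_left
          ((α.le_of_opNorm_le (ha.norm_resolvent_le hα₂) _).trans
            (by simpa using norm_add_le G K)) _)
    _ ≤ (1 / 2 + 2 * ‖M‖) * ‖l (l ξ)‖ := by linarith

lemma norm_exp_pow_apply_sub_douglasRachford_pow_apply_le {M : H →L[ℝ] H}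
    (ha : IsDissipative a) (hb : IsDissipative b)
    (hα₁ : α * (1 - a) = 1) (hα₂ : (1 - a) * α = 1)
    (hβ₁ : β * (1 - b) = 1) (hβ₂ : (1 - b) * β = 1)
    (hM : M * (a + b) = b) (n : ℕ) (ξ : H) :
    ‖(exp (a + b) ^ n) ξ - (douglasRachford a b α β ^ n) ξ‖ ≤
      n * ((1 / 2 + 2 * ‖M‖) * ‖(a + b) ((a + b) ξ)‖) := by
  set l := a + b
  set S := douglasRachford a b α β
  refine norm_pow_apply_sub_pow_apply_le (exp l) S
    (fun v => (1 / 2 + 2 * ‖M‖) * ‖l (l v)‖) (fun v => ?_) (fun m v => ?_) n ξ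
  · have hlE (w : H) : l (exp l w) = exp l (l w) := by
      simpa using apply_exp_smul_apply l 1 w
    rw [hlE, hlE]
    gcongr
    simpa using (ha.add hb).norm_exp_smul_apply_le zero_le_one (l (l v))
  · have hv : (S ^ m * β) (((1 - b) * (exp l - S)) v) = (S ^ m) (exp l v - S v) := by
      rw [← mul_apply_eq_comp, mul_assoc, ← mul_assoc β, hβ₁, one_mul]
      rfl
    rw [← hv]
    refine ((S ^ m * β).le_of_opNorm_le
      (norm_douglasRachford_pow_mul_le ha hb hα₁ hα₂ hβ₂ m) _).trans ?_
    rw [one_mul]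
    exact norm_one_sub_mul_exp_sub_douglasRachford_apply_le ha hb hα₁ hα₂ hβ₂ hM v

end DouglasRachford

theorem douglas_rachford_first_order_convergence_general
    {H : Type*} [NormedAddCommGroup H] [InnerProductSpace ℝ H] [CompleteSpace H]
    (A B : H →L[ℝ] H)
    (hA : ∀ v : H, ⟪A v, v⟫ ≤ 0) (hB : ∀ v : H, ⟪B v, v⟫ ≤ 0)
    (k : ℝ) (hk : 0 < k)
    (L : H →L[ℝ] H) (hL : L = A + B)
    (Linv : H →L[ℝ] H) (hLinv₁ : Linv ∘L L = 1)
    (α β : H →L[ℝ] H)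
    (hα₁ : α ∘L (1 - k • A) = 1) (hα₂ : (1 - k • A : H →L[ℝ] H) ∘L α = 1)
    (hβ₁ : β ∘L (1 - k • B) = 1) (hβ₂ : (1 - k • B : H →L[ℝ] H) ∘L β = 1)
    (S : H →L[ℝ] H) (hS : S = β ∘L α ∘L (1 + k ^ 2 • (A ∘L B)))
    (n : ℕ) (η : H) :
    ‖(NormedSpace.exp ((n * k) • L)) η - (S ^ n) η‖ ≤
      (n * k) * k * (1 / 2 + 2 * ‖B ∘L Linv‖) * ‖L (L η)‖ := by
  have hkL : k • L = k • A + k • B := by rw [hL, smul_add]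
  have hexp : exp ((n * k) • L) = exp (k • L) ^ n := by
    -- `NormedSpace.exp_nsmul` is only available for `ℚ`-algebras.
    let _ : NormedAlgebra ℚ (H →L[ℝ] H) := NormedAlgebra.restrictScalars ℚ ℝ _
    rw [mul_smul, Nat.cast_smul_eq_nsmul, NormedSpace.exp_nsmul]
  have hS' : S = douglasRachford (k • A) (k • B) α β := by
    rw [hS, douglasRachford, smul_mul_smul_comm, ← pow_two]
    rfl
  have hM : (B ∘L Linv) * (k • A + k • B) = k • B := by
    rw [← hkL, mul_smul_comm]
    exact congrArg (k • ·) (congrArg (B ∘L ·) hLinv₁)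
  calc ‖exp ((n * k) • L) η - (S ^ n) η‖
      = ‖(exp (k • A + k • B) ^ n) η - (douglasRachford (k • A) (k • B) α β ^ n) η‖ := by
        rw [hexp, hkL, hS']
    _ ≤ n * ((1 / 2 + 2 * ‖B ∘L Linv‖) * ‖(k • A + k • B) ((k • A + k • B) η)‖) :=
        norm_exp_pow_apply_sub_douglasRachford_pow_apply_le (IsDissipative.smul hA hk.le)
          (IsDissipative.smul hB hk.le) hα₁ hα₂ hβ₁ hβ₂ hM n η
    _ = (n * k) * k * (1 / 2 + 2 * ‖B ∘L Linv‖) * ‖L (L η)‖ := by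
        rw [← hkL]
        simp only [smul_apply, map_smul, norm_smul, Real.norm_of_nonneg hk.le]
        ring

/-- First-order temporal convergence of the Douglas–Rachford
splitting (bounded-operator form of Lemma 4.1): with `L = A + B` bijective
(inverse `Linv`), `α = (I - kA)⁻¹`, `β = (I - kB)⁻¹` and
`S = β ∘ α ∘ (I + k² A∘B)`, for every `n` and `η`:
`‖exp(nkL)η - Sⁿη‖ ≤ n k · k · (1/2 + 2‖B ∘ L⁻¹‖) · ‖L²η‖`. -/
theorem douglas_rachford_first_order_convergence
    {H : Type*} [NormedAddCommGroup H] [InnerProductSpace ℝ H] [CompleteSpace H]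
    (A B : H →L[ℝ] H)
    (hA : ∀ v : H, ⟪A v, v⟫ ≤ 0) (hB : ∀ v : H, ⟪B v, v⟫ ≤ 0)
    (k : ℝ) (hk : 0 < k)
    (L : H →L[ℝ] H) (hL : L = A + B)
    (Linv : H →L[ℝ] H) (hLinv₁ : Linv ∘L L = 1) (hLinv₂ : L ∘L Linv = 1)
    (α β : H →L[ℝ] H)
    (hα₁ : α ∘L (1 - k • A) = 1) (hα₂ : (1 - k • A : H →L[ℝ] H) ∘L α = 1)
    (hβ₁ : β ∘L (1 - k • B) = 1) (hβ₂ : (1 - k • B : H →L[ℝ] H) ∘L β = 1)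
    (S : H →L[ℝ] H) (hS : S = β ∘L α ∘L (1 + k ^ 2 • (A ∘L B)))
    (n : ℕ) (η : H) :
    ‖(NormedSpace.exp ((n * k) • L)) η - (S ^ n) η‖ ≤
      (n * k) * k * (1 / 2 + 2 * ‖B ∘L Linv‖) * ‖L (L η)‖ :=
  douglas_rachford_first_order_convergence_general A B hA hB k hk L hL Linv hLinv₁ α β hα₁ hα₂ hβ₁
    hβ₂ S hS n η
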